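/- Define the N-qubit Bell code of cardinality M = 2^{N−1}K (K ≥ 2): for k = 0,…,K−1 and l = 0,…,2^{N−2}−1, |φ_{1+2k+2Kl}⟩ = ((|00⟩+e^{2πik/K}|11⟩)/√2)⊗|l⟩ and |φ_{2+2k+2Kl}⟩ = ((|01⟩+e^{2πik/K}|10⟩)/√2)⊗|l⟩ where |l⟩ ranges over the computational basis of ℂ^{2^{N−2}}. Then Σ_{m=1}^{M} |φ_m⟩⟨φ_m| = (M/2^N)·I_{2^N}, and the minimum error probability of discriminating the equiprobable pure states |φ_m⟩⟨φ_m| equals 1 − 2^N/M. -/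

import Mathlib

/-!
The Bell code is a tight frame: summing over the phase index `k` kills the off-diagonal terms
`e^{±2πik/K}` of the two-qubit projectors (a full sum of `K`-th roots of unity vanishes), and
the basis index `l` supplies the identity on `ℂ^{2^{N-2}}`, so `Σ_m |φ_m⟩⟨φ_m| = (M/2^N) I`.
For any POVM, `⟨φ_m|Π_m|φ_m⟩ ≤ tr Π_m` because `I - |φ_m⟩⟨φ_m|` is positive, so the success
probability is at most `(1/M) tr I = 2^N/M`; the tight-frame identity makes
`Π_m = (2^N/M)|φ_m⟩⟨φ_m|` a POVM attaining it.
-/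

open ComplexOrder

/-- The `N`-qubit generalized Bell vectors in `ℂ⁴ ⊗ ℂ^L` (`L = 2^{N−2}`), of
cardinality `M = 2KL`: the vector with index `2k + 2Kl` is
`((|00⟩ + e^{2πik/K}|11⟩)/√2) ⊗ |l⟩` and the one with index `1 + 2k + 2Kl` is
`((|01⟩ + e^{2πik/K}|10⟩)/√2) ⊗ |l⟩`. -/
noncomputable def bellN (K L : ℕ) (m : Fin (2 * K * L)) : Fin 4 × Fin L → ℂ :=
  fun q =>
    let l : ℕ := m.val / (2 * K)
    let k : ℕ := (m.val % (2 * K)) / 2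
    let ω : ℂ := Complex.exp (2 * Real.pi * Complex.I * k / K)
    (if q.2.val = l then 1 else 0) *
    (if m.val % 2 = 0 then
        ![1 / (Real.sqrt 2 : ℂ), 0, 0, ω / (Real.sqrt 2 : ℂ)] q.1
      else
        ![0, 1 / (Real.sqrt 2 : ℂ), ω / (Real.sqrt 2 : ℂ), 0] q.1)

open Complex Finset Matrix ComplexConjugate
open scoped Kronecker

namespace Matrix

section Kronecker

variable {ι l m n p α : Type*}

theorem sum_kronecker [NonUnitalNonAssocSemiring α] (s : Finset ι) (A : ι → Matrix l m α)
    (B : Matrix n p α) : (∑ i ∈ s, A i) ⊗ₖ B = ∑ i ∈ s, A i ⊗ₖ B := by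
  ext
  simp [Matrix.sum_apply, sum_mul]

theorem kronecker_sum [NonUnitalNonAssocSemiring α] (s : Finset ι) (A : Matrix l m α)
    (B : ι → Matrix n p α) : A ⊗ₖ (∑ i ∈ s, B i) = ∑ i ∈ s, A ⊗ₖ B i := by
  ext
  simp [Matrix.sum_apply, mul_sum]

theorem vecMulVec_mul_eq_kronecker [CommMonoid α] (u : l → α) (v : m → α) (w : n → α)
    (z : p → α) :
    vecMulVec (fun i : l × n => u i.1 * w i.2) (fun j : m × p => v j.1 * z j.2) =
      vecMulVec u v ⊗ₖ vecMulVec w z := by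
  ext
  simp [vecMulVec_apply, mul_mul_mul_comm]

theorem sum_vecMulVec_single_one [Fintype n] [DecidableEq n] [NonAssocSemiring α] [StarRing α] :
    ∑ i : n, vecMulVec (Pi.single i (1 : α)) (star (Pi.single i 1)) = 1 := by
  ext
  simp [Matrix.sum_apply, vecMulVec_apply, Pi.single_apply, one_apply]

end Kronecker

variable {𝕜 n : Type*} [RCLike 𝕜] [Fintype n]

theorem PosSemidef.trace_mul_nonneg {A B : Matrix n n 𝕜} (hA : A.PosSemidef)
    (hB : B.PosSemidef) : 0 ≤ (A * B).trace := by
  classical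
  open scoped MatrixOrder in
  obtain ⟨C, rfl⟩ := CStarAlgebra.nonneg_iff_eq_star_mul_self.mp hB.nonneg
  rw [← Matrix.mul_assoc, trace_mul_cycle, star_eq_conjTranspose]
  exact (hA.mul_mul_conjTranspose_same C).trace_nonneg

variable {v : n → 𝕜}

theorem vecMulVec_self_star_mul_self (hv : star v ⬝ᵥ v = 1) :
    vecMulVec v (star v) * vecMulVec v (star v) = vecMulVec v (star v) := by
  rw [vecMulVec_mul_vecMulVec, hv, one_smul]

variable [DecidableEq n]

theorem posSemidef_one_sub_vecMulVec_self_star (hv : star v ⬝ᵥ v = 1) :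
    (1 - vecMulVec v (star v)).PosSemidef := by
  have hP : (1 - vecMulVec v (star v))ᴴ = 1 - vecMulVec v (star v) :=
    (PosSemidef.one.isHermitian.sub (posSemidef_vecMulVec_self_star v).isHermitian).eq
  have := posSemidef_conjTranspose_mul_self (1 - vecMulVec v (star v))
  rwa [hP, Matrix.sub_mul, Matrix.mul_sub, Matrix.mul_sub, vecMulVec_self_star_mul_self hv,
    Matrix.one_mul, Matrix.mul_one, Matrix.one_mul, sub_self, sub_zero] at this

theorem trace_vecMulVec_self_star_mul_le_trace (hv : star v ⬝ᵥ v = 1) {Q : Matrix n n 𝕜}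
    (hQ : Q.PosSemidef) : (vecMulVec v (star v) * Q).trace ≤ Q.trace := by
  have := (posSemidef_one_sub_vecMulVec_self_star hv).trace_mul_nonneg hQ
  rwa [Matrix.sub_mul, Matrix.one_mul, trace_sub, sub_nonneg] at this

open Fintype in
theorem isLeast_error_of_sum_vecMulVec_eq_smul_one {ι : Type*} [Fintype ι] [Nonempty ι]
    (v : ι → n → 𝕜) (hv : ∀ m, star (v m) ⬝ᵥ v m = 1)
    (hframe : ∑ m, vecMulVec (v m) (star (v m)) = ((card ι : 𝕜) / card n) • 1) :
    IsLeast {e : 𝕜 | ∃ Q : ι → Matrix n n 𝕜, (∀ i, (Q i).PosSemidef) ∧ (∑ i, Q i = 1) ∧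
        e = 1 - ∑ m, (1 / (card ι : 𝕜)) * (vecMulVec (v m) (star (v m)) * Q m).trace}
      (1 - card n / card ι) := by
  have hι : (card ι : 𝕜) ≠ 0 := Nat.cast_ne_zero.mpr card_ne_zero
  have hn : (card n : 𝕜) ≠ 0 := by
    obtain ⟨m⟩ := ‹Nonempty ι›
    have : Nonempty n := by
      by_contra h
      simpa [not_nonempty_iff.mp h, dotProduct] using hv m
    exact Nat.cast_ne_zero.mpr card_ne_zero
  constructor
  · refine ⟨fun m => ((card n : 𝕜) / card ι) • vecMulVec (v m) (star (v m)), fun m => ?_, ?_, ?_⟩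
    · exact (posSemidef_vecMulVec_self_star _).smul
        (div_nonneg (Nat.cast_nonneg _) (Nat.cast_nonneg _))
    · rw [← smul_sum, hframe, smul_smul, div_mul_div_cancel₀ hι, div_self hn, one_smul]
    · simp only [mul_smul_comm, vecMulVec_self_star_mul_self (hv _), trace_smul, trace_vecMulVec,
        dotProduct_comm _ (star _), hv, smul_eq_mul, mul_one, sum_const, card_univ, nsmul_eq_mul]
      field_simp
  · rintro e ⟨Q, hQ, hsum, rfl⟩
    gcongr 1 - ?_
    calc ∑ m, (1 / (card ι : 𝕜)) * (vecMulVec (v m) (star (v m)) * Q m).trace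
        ≤ ∑ m, (1 / (card ι : 𝕜)) * (Q m).trace := by
          gcongr with m
          exact trace_vecMulVec_self_star_mul_le_trace (hv m) (hQ m)
      _ = card n / card ι := by
          rw [← mul_sum, ← trace_sum, hsum, trace_one]
          ring

end Matrix

noncomputable def bellPhase (K k : ℕ) : ℂ := exp (2 * Real.pi * I * k / K)

theorem sum_bellPhase_eq_zero {K : ℕ} (hK : 1 < K) : ∑ k : Fin K, bellPhase K k = 0 := by
  have hζ := isPrimitiveRoot_exp K (by omega)
  rw [← hζ.geom_sum_eq_zero hK, ← Fin.sum_univ_eq_sum_range]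
  refine sum_congr rfl fun k _ => ?_
  rw [bellPhase, ← exp_nat_mul]
  ring_nf

theorem bellPhase_mul_conj (K k : ℕ) : bellPhase K k * conj (bellPhase K k) = 1 := by
  rw [bellPhase, ← exp_conj, ← exp_add]
  simp [map_div₀, conj_I, map_ofNat, ← add_div]

noncomputable def twoQubitBell (K : ℕ) (k : Fin K) (p : Fin 2) : Fin 4 → ℂ :=
  if (p : ℕ) = 0 then ![1 / (√2 : ℂ), 0, 0, bellPhase K k / (√2 : ℂ)]
  else ![0, 1 / (√2 : ℂ), bellPhase K k / (√2 : ℂ), 0]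

theorem inv_sqrt_two_mul_inv_sqrt_two : ((√2 : ℝ) : ℂ)⁻¹ * ((√2 : ℝ) : ℂ)⁻¹ = 1 / 2 := by
  rw [← mul_inv, ← ofReal_mul, Real.mul_self_sqrt zero_le_two]
  norm_num

theorem twoQubitBell_dotProduct_star (K : ℕ) (k : Fin K) (p : Fin 2) :
    twoQubitBell K k p ⬝ᵥ star (twoQubitBell K k p) = 1 := by
  by_cases hp : (p : ℕ) = 0 <;>
    simp [twoQubitBell, hp, dotProduct, Fin.sum_univ_four, div_eq_mul_inv,
      mul_mul_mul_comm _ ((√2 : ℝ) : ℂ)⁻¹, inv_sqrt_two_mul_inv_sqrt_two, bellPhase_mul_conj] <;>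
    norm_num

theorem sum_vecMulVec_twoQubitBell {K : ℕ} (hK : 1 < K) :
    ∑ x : Fin K × Fin 2, vecMulVec (twoQubitBell K x.1 x.2) (star (twoQubitBell K x.1 x.2)) =
      ((K : ℂ) / 2) • 1 := by
  ext a b
  rw [Matrix.sum_apply, Fintype.sum_prod_type]
  fin_cases a <;> fin_cases b <;>
    simp [twoQubitBell, vecMulVec_apply, div_eq_mul_inv, mul_mul_mul_comm _ ((√2 : ℝ) : ℂ)⁻¹,
      ← sum_mul, ← mul_sum, ← map_sum, inv_sqrt_two_mul_inv_sqrt_two, sum_bellPhase_eq_zero hK,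
      bellPhase_mul_conj]

/-- `(l, k, p) ↦ p + 2k + 2Kl`, the indexing of `bellN`. -/
def bellIndexEquiv (K L : ℕ) : Fin L × Fin K × Fin 2 ≃ Fin (2 * K * L) :=
  ((Equiv.refl _).prodCongr (finProdFinEquiv.trans (finCongr (mul_comm K 2)))).trans
    (finProdFinEquiv.trans (finCongr (mul_comm L (2 * K))))

theorem bellN_bellIndexEquiv_apply {K L : ℕ} (x : Fin L × Fin K × Fin 2) (q : Fin 4 × Fin L) :
    bellN K L (bellIndexEquiv K L x) q =
      twoQubitBell K x.2.1 x.2.2 q.1 * (Pi.single x.1 1 : Fin L → ℂ) q.2 := by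
  obtain ⟨l, k, p⟩ := x
  have hp := p.isLt
  have hk := k.isLt
  have hval : (bellIndexEquiv K L (l, k, p) : ℕ) = (p + 2 * k) + 2 * K * l := by
    simp [bellIndexEquiv, finProdFinEquiv]
  have hdiv : (bellIndexEquiv K L (l, k, p) : ℕ) / (2 * K) = l := by
    rw [hval, Nat.add_mul_div_left _ _ (by omega), Nat.div_eq_of_lt (by omega), zero_add]
  have hmod : (bellIndexEquiv K L (l, k, p) : ℕ) % (2 * K) = p + 2 * k := by
    rw [hval, Nat.add_mul_mod_self_left, Nat.mod_eq_of_lt (by omega)]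
  have hpar : (bellIndexEquiv K L (l, k, p) : ℕ) % 2 = p := by
    rw [← Nat.mod_mod_of_dvd _ (dvd_mul_right 2 K), hmod]
    omega
  have hhalf : (p + 2 * k : ℕ) / 2 = k := by omega
  simp only [bellN, hdiv, hmod, hpar, hhalf, twoQubitBell, bellPhase, Pi.single_apply, Fin.ext_iff,
    ite_apply]
  exact mul_comm _ _

theorem vecMulVec_bellN_bellIndexEquiv {K L : ℕ} (x : Fin L × Fin K × Fin 2) :
    vecMulVec (bellN K L (bellIndexEquiv K L x)) (star (bellN K L (bellIndexEquiv K L x))) =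
      vecMulVec (twoQubitBell K x.2.1 x.2.2) (star (twoQubitBell K x.2.1 x.2.2)) ⊗ₖ
        vecMulVec (Pi.single x.1 1) (star (Pi.single x.1 1)) := by
  rw [← vecMulVec_mul_eq_kronecker]
  congr 1
  · exact funext (bellN_bellIndexEquiv_apply x)
  · ext q
    simp [bellN_bellIndexEquiv_apply x q]

theorem star_bellN_dotProduct {K L : ℕ} (m : Fin (2 * K * L)) :
    star (bellN K L m) ⬝ᵥ bellN K L m = 1 := by
  obtain ⟨x, rfl⟩ := (bellIndexEquiv K L).surjective m
  rw [dotProduct_comm, ← trace_vecMulVec, vecMulVec_bellN_bellIndexEquiv, trace_kronecker,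
    trace_vecMulVec, trace_vecMulVec, twoQubitBell_dotProduct_star]
  simp

theorem sum_vecMulVec_bellN {K L : ℕ} (hK : 1 < K) :
    ∑ m, vecMulVec (bellN K L m) (star (bellN K L m)) =
      ((K : ℂ) / 2) • (1 : Matrix (Fin 4 × Fin L) (Fin 4 × Fin L) ℂ) := by
  rw [← (bellIndexEquiv K L).sum_comp]
  simp only [vecMulVec_bellN_bellIndexEquiv, Fintype.sum_prod_type, ← sum_kronecker,
    sum_vecMulVec_twoQubitBell hK]
  rw [← kronecker_sum, sum_vecMulVec_single_one, smul_kronecker, one_kronecker_one]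

/-- The `N`-qubit Bell code of cardinality `M = 2^{N−1}K` resolves the identity,
`Σ_m |φ_m⟩⟨φ_m| = (M/2^N) I`, and the minimum error probability of discriminating
the equiprobable pure states `|φ_m⟩⟨φ_m|` equals `1 − 2^N/M`. -/
theorem bellN_code_min_error (N K : ℕ) (hN : 2 ≤ N) (hK : 2 ≤ K)
    (W : Fin (2 * K * 2 ^ (N - 2)) →
      Matrix (Fin 4 × Fin (2 ^ (N - 2))) (Fin 4 × Fin (2 ^ (N - 2))) ℂ)
    (hWdef : ∀ m, W m = Matrix.vecMulVec (bellN K (2 ^ (N - 2)) m)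
      (star (bellN K (2 ^ (N - 2)) m))) :
    (∑ m, W m = (((2 * K * 2 ^ (N - 2) : ℕ) : ℂ) / ((2 ^ N : ℕ) : ℂ)) •
      (1 : Matrix (Fin 4 × Fin (2 ^ (N - 2))) (Fin 4 × Fin (2 ^ (N - 2))) ℂ)) ∧
    IsLeast {e : ℂ | ∃ Q : Fin (2 * K * 2 ^ (N - 2)) →
        Matrix (Fin 4 × Fin (2 ^ (N - 2))) (Fin 4 × Fin (2 ^ (N - 2))) ℂ,
        (∀ i, (Q i).PosSemidef) ∧ (∑ i, Q i = 1) ∧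
        e = 1 - ∑ m, (1 / ((2 * K * 2 ^ (N - 2) : ℕ) : ℂ)) * (W m * Q m).trace}
      (1 - ((2 ^ N : ℕ) : ℂ) / ((2 * K * 2 ^ (N - 2) : ℕ) : ℂ)) := by
  obtain rfl : W = fun m => vecMulVec (bellN K (2 ^ (N - 2)) m) (star (bellN K (2 ^ (N - 2)) m)) :=
    funext hWdef
  have hdim : 4 * 2 ^ (N - 2) = 2 ^ N := by
    rw [← pow_sub_mul_pow 2 hN]
    ring
  have hcoeff : ((2 * K * 2 ^ (N - 2) : ℕ) : ℂ) / ((2 ^ N : ℕ) : ℂ) = K / 2 := by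
    rw [← hdim]
    push_cast
    field_simp
    ring
  have hframe := sum_vecMulVec_bellN (L := 2 ^ (N - 2)) (by omega : 1 < K)
  refine ⟨by rw [hframe, hcoeff], ?_⟩
  have : Nonempty (Fin (2 * K * 2 ^ (N - 2))) := ⟨⟨0, by positivity⟩⟩
  have hcard : Fintype.card (Fin 4 × Fin (2 ^ (N - 2))) = 2 ^ N := by simp [hdim]
  have hmin := isLeast_error_of_sum_vecMulVec_eq_smul_one (bellN K (2 ^ (N - 2)))
    star_bellN_dotProduct (by rwa [hcard, Fintype.card_fin, hcoeff])
  rwa [hcard, Fintype.card_fin] at hmin
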